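/- Let n = 2m-1 be odd with 2 ≤ m ≤ s, G = W(C_n) the whiskered cycle, and I its edge ideal. If M = (x_1x_2)(x_3x_4)⋯(x_{2m-3}x_{2m-2})(x_{2m-1}x_1)·N for some N ∈ I^{s-m}, then x_{n+1}^2 · M ∈ I^{s+1}. -/

import Mathlib

open MvPolynomial
open Fin.NatCast

/-- The whiskered cycle `W(C_n)`: `Sum.inl i` is the cycle vertex `x_{i+1}` and
`Sum.inr i` is the whisker vertex `x_{n+i+1}`. -/
def whiskerCycle (n : ℕ) [NeZero n] : SimpleGraph (Fin n ⊕ Fin n) :=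
  SimpleGraph.fromRel (fun a b =>
    (∃ i : Fin n, a = Sum.inl i ∧ b = Sum.inl (i + 1)) ∨
    (∃ i : Fin n, a = Sum.inl i ∧ b = Sum.inr i))

/-- The edge ideal of a graph `G`. -/
noncomputable def edgeIdeal (K : Type*) [Field K] {V : Type*} (G : SimpleGraph V) :
    Ideal (MvPolynomial V K) :=
  Ideal.span {m | ∃ u v, G.Adj u v ∧ m = X u * X v}

/-!
Write `x_j` for the cycle variables and `y = x_{n+1}`. Since `n = 2m - 1`, the given factor
`(x_1x_2)⋯(x_{2m-3}x_{2m-2})(x_{2m-1}x_1)` is `x_1 · x_1x_2⋯x_n`, and the cycle monomial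
`x_1x_2⋯x_n` can be paired the other way round, as `x_1 · (x_2x_3)⋯(x_{2m-2}x_{2m-1})`. Hence
`y² M = (y x_1)² · (x_2x_3)⋯(x_{2m-2}x_{2m-1}) · N`, a product of `2 + (m - 1)` edges and an
element of `I^{s-m}`, so it lies in `I^{2 + (m-1) + (s-m)} ⊆ I^{s+1}`.
-/

lemma X_mul_X_mem_edgeIdeal (K : Type*) [Field K] {V : Type*} {G : SimpleGraph V}
    {u v : V} (h : G.Adj u v) : X u * X v ∈ edgeIdeal K G :=
  Ideal.subset_span ⟨u, v, h, rfl⟩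

lemma whiskerCycle_adj_inl_add_one {n : ℕ} [NeZero n] (hn : 2 ≤ n) (i : Fin n) :
    (whiskerCycle n).Adj (Sum.inl i) (Sum.inl (i + 1)) := by
  refine SimpleGraph.fromRel_adj _ _ _ |>.mpr ⟨?_, .inl (.inl ⟨i, rfl, rfl⟩)⟩
  rw [ne_eq, Sum.inl.injEq, left_eq_add, Fin.one_eq_zero_iff]
  omega

lemma whiskerCycle_adj_inr_inl {n : ℕ} [NeZero n] (i : Fin n) :
    (whiskerCycle n).Adj (Sum.inr i) (Sum.inl i) :=
  SimpleGraph.fromRel_adj _ _ _ |>.mpr ⟨by simp, .inr (.inr ⟨i, rfl, rfl⟩)⟩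

lemma Ideal.prod_range_mem_pow {R : Type*} [CommSemiring R] (I : Ideal R) {k : ℕ}
    {g : ℕ → R} (h : ∀ t < k, g t ∈ I) : ∏ t ∈ Finset.range k, g t ∈ I ^ k := by
  simpa using Ideal.prod_mem_prod (I := fun _ => I) fun t ht => h t (Finset.mem_range.mp ht)

lemma prod_range_pairs_mul_eq_mul_prod_range_pairs_succ {M : Type*} [CommMonoid M]
    (f : ℕ → M) (k : ℕ) :
    (∏ t ∈ Finset.range k, f (2 * t) * f (2 * t + 1)) * f (2 * k) =
      f 0 * ∏ t ∈ Finset.range k, f (2 * t + 1) * f (2 * t + 2) := by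
  induction k with
  | zero => simp
  | succ k ih =>
    rw [Finset.prod_range_succ, Finset.prod_range_succ, ← mul_assoc (f 0), ← ih, Nat.mul_succ]
    simp only [mul_assoc]

theorem whisker_sq_mul_mem_general (K : Type*) [Field K] (n m s : ℕ) [NeZero n]
    (hn : n = 2 * m - 1)
    (N M : MvPolynomial (Fin n ⊕ Fin n) K)
    (hN : N ∈ edgeIdeal K (whiskerCycle n) ^ (s - m))
    (hM : M = (∏ t ∈ Finset.range (m - 1),
        X (Sum.inl ((2 * t : ℕ) : Fin n)) * X (Sum.inl ((2 * t + 1 : ℕ) : Fin n))) *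
      (X (Sum.inl ((n - 1 : ℕ) : Fin n)) * X (Sum.inl (0 : Fin n))) * N) :
    X (Sum.inr (0 : Fin n)) ^ 2 * M ∈ edgeIdeal K (whiskerCycle n) ^ (s + 1) := by
  set I := edgeIdeal K (whiskerCycle n)
  set x : ℕ → MvPolynomial (Fin n ⊕ Fin n) K := fun j => X (Sum.inl (j : Fin n))
  have hm : 1 ≤ m := by have := NeZero.ne n; omega
  have hregroup : X (Sum.inr 0) ^ 2 * M =
      (X (Sum.inr 0) * x 0) ^ 2 *
        (∏ t ∈ Finset.range (m - 1), x (2 * t + 1) * x (2 * t + 2)) * N := by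
    have hpairs := prod_range_pairs_mul_eq_mul_prod_range_pairs_succ x (m - 1)
    rw [show 2 * (m - 1) = n - 1 by omega] at hpairs
    rw [hM, show X (Sum.inl 0) = x 0 by simp [x]]
    linear_combination X (Sum.inr 0) ^ 2 * x 0 * N * hpairs
  have hcycle : ∏ t ∈ Finset.range (m - 1), x (2 * t + 1) * x (2 * t + 2) ∈ I ^ (m - 1) := by
    refine I.prod_range_mem_pow fun t ht => ?_
    have hx : x (2 * t + 2) = X (Sum.inl (((2 * t + 1 : ℕ) : Fin n) + 1)) := by
      rw [← Nat.cast_add_one]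
    rw [hx]
    exact X_mul_X_mem_edgeIdeal K (whiskerCycle_adj_inl_add_one (by omega) _)
  have hwhisker : (X (Sum.inr 0) * x 0) ^ 2 ∈ I ^ 2 :=
    Ideal.pow_mem_pow (by simpa [x] using X_mul_X_mem_edgeIdeal K (whiskerCycle_adj_inr_inl 0)) 2
  rw [hregroup]
  refine Ideal.pow_le_pow_right (n := 2 + (m - 1) + (s - m)) (by omega) ?_
  rw [pow_add, pow_add]
  exact Ideal.mul_mem_mul (Ideal.mul_mem_mul hwhisker hcycle) hN

/-- for `n = 2m-1` odd with `2 ≤ m ≤ s`, if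
`M = (x_1x_2)(x_3x_4)⋯(x_{2m-3}x_{2m-2})(x_{2m-1}x_1)·N` with `N ∈ I^{s-m}`,
then `x_{n+1}^2 · M ∈ I^{s+1}`.  (Here `x_j = X (Sum.inl (j-1))` for
`1 ≤ j ≤ n` and `x_{n+1} = X (Sum.inr 0)`.) -/
theorem whisker_sq_mul_mem (K : Type*) [Field K] (n m s : ℕ) [NeZero n]
    (hn : n = 2 * m - 1) (hm : 2 ≤ m) (hms : m ≤ s)
    (N M : MvPolynomial (Fin n ⊕ Fin n) K)
    (hN : N ∈ edgeIdeal K (whiskerCycle n) ^ (s - m))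
    (hM : M = (∏ t ∈ Finset.range (m - 1),
        X (Sum.inl ((2 * t : ℕ) : Fin n)) * X (Sum.inl ((2 * t + 1 : ℕ) : Fin n))) *
      (X (Sum.inl ((n - 1 : ℕ) : Fin n)) * X (Sum.inl (0 : Fin n))) * N) :
    X (Sum.inr (0 : Fin n)) ^ 2 * M ∈ edgeIdeal K (whiskerCycle n) ^ (s + 1) :=
  whisker_sq_mul_mem_general K n m s hn N M hN hM
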